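/- arXiv:2004.03524 — 4 statements merged into one kernel-verified Lean document; each statement's English description precedes it below -/
import Mathlib

section
/- Let N be the submonoid of ℕ × (ℤ × ℤ) consisting of all triples (n, (a, b)) such that a + b equals the image of n in ℤ (i.e., the pullback of the canonical inclusion ℕ → ℤ along the addition map ℤ × ℤ → ℤ, formed in commutative monoids). Then the map N → ℕ × ℤ sending (n, (a, b)) to (n, a) is an isomorphism of commutative monoids. -/
/-- The pullback of the canonical inclusion `ℕ → ℤ` along the addition map
`ℤ × ℤ → ℤ`, formed in commutative (additive) monoids: the submonoid of
`ℕ × (ℤ × ℤ)` consisting of all `(n, (a, b))` with `a + b` equal to the image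
of `n` in `ℤ`. -/
def repletionOfCodiagonal : AddSubmonoid (ℕ × ℤ × ℤ) where
  carrier := {p | p.2.1 + p.2.2 = (p.1 : ℤ)}
  zero_mem' := by simp
  add_mem' := by
    intro p q hp hq
    simp only [Set.mem_setOf_eq, Prod.fst_add, Prod.snd_add] at *
    push_cast
    omega

def repletionEquiv : repletionOfCodiagonal ≃+ ℕ × ℤ where
  toFun x := ((x : ℕ × ℤ × ℤ).1, (x : ℕ × ℤ × ℤ).2.1)
  invFun p := ⟨(p.1, p.2, (p.1 : ℤ) - p.2), by simp [repletionOfCodiagonal]⟩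
  left_inv := by
    rintro ⟨⟨n, a, b⟩, hx⟩
    have hb : b = (n : ℤ) - a := by
      have : a + b = (n : ℤ) := hx
      omega
    subst hb; rfl
  right_inv := by rintro ⟨n, a⟩; rfl
  map_add' x y := rfl

/-- The map `N → ℕ × ℤ` sending `(n, (a, b))` to `(n, a)` is an isomorphism of
commutative (additive) monoids, where `N` is the pullback of `ℕ → ℤ` along the
addition `ℤ × ℤ → ℤ`. -/
theorem repletion_iso_nat_prod_int :
    ∃ e : repletionOfCodiagonal ≃+ ℕ × ℤ,
      ∀ x : repletionOfCodiagonal, e x = ((x : ℕ × ℤ × ℤ).1, (x : ℕ × ℤ × ℤ).2.1) :=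
  ⟨repletionEquiv, fun _ => rfl⟩
end

section
/- Let k be a commutative ring, let R → A be a homomorphism of commutative k-algebras, and let n ≥ 1. Regard the n-fold tensor power A^{⊗_k n} as an algebra over the n-fold tensor power R^{⊗_k n} via the map induced by R → A in each factor, and regard R as an R^{⊗_k n}-algebra via the iterated multiplication map R^{⊗_k n} → R. Then the canonical map A^{⊗_k n} ⊗_{R^{⊗_k n}} R → A^{⊗_R n}, determined by (a_1 ⊗ ⋯ ⊗ a_n) ⊗ r ↦ a_1 ⊗ ⋯ ⊗ (a_n · r), is an isomorphism of commutative rings. -/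
/-!
`A^{⊗_R n}` is the pushout of `A^{⊗_k n} ← R^{⊗_k n} → R`. The map `x ⊗ r ↦ x · r` is well
defined because `R^{⊗_k n}` acts on `A^{⊗_R n}` through multiplication `R^{⊗_k n} → R`. Its
inverse `a₁ ⊗ ⋯ ⊗ aₙ ↦ (a₁ ⊗ ⋯ ⊗ aₙ) ⊗ 1` is `R`-multilinear because scaling one factor of
`A^{⊗_k n}` by `r` is the action of `1 ⊗ ⋯ ⊗ r ⊗ ⋯ ⊗ 1 ∈ R^{⊗_k n}`, which crosses the outer
tensor sign as `r`. Both composites fix pure tensors, and for `n ≥ 1` these generate additively.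
-/

open scoped TensorProduct

open PiTensorProduct

namespace Algebra.TensorProduct

attribute [local instance] rightAlgebra

theorem rightAlgebra_smul_tmul {S A B : Type*} [CommSemiring S] [Semiring A] [Algebra S A]
    [CommSemiring B] [Algebra S B] (b : B) (x : A) (c : B) :
    b • (x ⊗ₜ[S] c) = x ⊗ₜ (b * c) := by
  rw [Algebra.smul_def, right_algebraMap_apply, tmul_mul_tmul, one_mul]

end Algebra.TensorProduct

namespace PiTensorProduct

section Ext

variable {ι R : Type*} [CommSemiring R]

theorem smul_tprod_eq_tprod_update {M : ι → Type*} [∀ i, AddCommMonoid (M i)]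
    [∀ i, Module R (M i)] [DecidableEq ι] (c : R) (m : ∀ i, M i) (i : ι) :
    c • tprod R m = tprod R (Function.update m i (c • m i)) := by
  rw [MultilinearMap.map_update_smul, Function.update_eq_self]

/-- Over a nonempty index type every element is a sum of pure tensors, since scalars can be
absorbed into one factor. -/
theorem addMonoidHom_ext [Nonempty ι] {M : ι → Type*} [∀ i, AddCommMonoid (M i)]
    [∀ i, Module R (M i)] {F : Type*} [AddCommMonoid F] {φ ψ : (⨂[R] i, M i) →+ F}
    (h : ∀ m, φ (tprod R m) = ψ (tprod R m)) : φ = ψ := by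
  classical
  obtain ⟨i⟩ := ‹Nonempty ι›
  refine AddMonoidHom.ext fun x => ?_
  induction x using PiTensorProduct.induction_on with
  | smul_tprod c m => rw [smul_tprod_eq_tprod_update c m i, h]
  | add x y hx hy => rw [map_add, map_add, hx, hy]

theorem ringHom_ext [Nonempty ι] {A : ι → Type*} [∀ i, Semiring (A i)] [∀ i, Algebra R (A i)]
    {B : Type*} [NonAssocSemiring B] {φ ψ : (⨂[R] i, A i) →+* B}
    (h : ∀ a, φ (tprod R a) = ψ (tprod R a)) : φ = ψ :=
  RingHom.coe_addMonoidHom_injective (addMonoidHom_ext h)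

end Ext

section Tower

variable {ι : Type*} (k R : Type*) {A : ι → Type*} [CommSemiring k] [CommSemiring R]
  [Algebra k R] [∀ i, Semiring (A i)] [∀ i, Algebra k (A i)] [∀ i, Algebra R (A i)]
  [∀ i, IsScalarTower k R (A i)]

noncomputable def towerAlgHom : (⨂[k] i, A i) →ₐ[k] ⨂[R] i, A i :=
  liftAlgHom ((tprod R).restrictScalars k) rfl fun x y => (tprod_mul_tprod x y).symm

@[simp]
theorem towerAlgHom_tprod (a : ∀ i, A i) : towerAlgHom k R (tprod k a) = tprod R a :=
  lift.tprod a

end Tower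

section Pushout

variable {ι k R A : Type*} [Fintype ι] [CommSemiring k] [CommSemiring R] [CommSemiring A]
  [Algebra k R] [Algebra k A] [Algebra R A]
  [Algebra (⨂[k] _ : ι, R) (⨂[k] _ : ι, A)] [Algebra (⨂[k] _ : ι, R) R]

theorem tprod_update_smul_tmul_one [DecidableEq ι]
    (hg : ∀ r : ι → R, algebraMap (⨂[k] _ : ι, R) (⨂[k] _ : ι, A) (tprod k r) =
      tprod k fun i => algebraMap R A (r i))
    (hm : ∀ r : ι → R, algebraMap (⨂[k] _ : ι, R) R (tprod k r) = ∏ i, r i)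
    (a : ι → A) (i : ι) (r : R) :
    tprod k (Function.update a i (r • a i)) ⊗ₜ[⨂[k] _ : ι, R] (1 : R) = tprod k a ⊗ₜ r := by
  have hupdate : Function.update a i (r • a i) =
      (fun j => algebraMap R A ((Pi.mulSingle i r : ι → R) j)) * a := by
    funext j
    rcases eq_or_ne j i with rfl | hj
    · simp [Algebra.smul_def]
    · simp [hj]
  rw [hupdate, ← tprod_mul_tprod, ← hg, ← Algebra.smul_def, TensorProduct.smul_tmul,
    Algebra.smul_def, hm, Fintype.prod_pi_mulSingle', mul_one]

theorem towerAlgHom_algebraMap [Nonempty ι] [IsScalarTower k R A]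
    (hg : ∀ r : ι → R, algebraMap (⨂[k] _ : ι, R) (⨂[k] _ : ι, A) (tprod k r) =
      tprod k fun i => algebraMap R A (r i))
    (hm : ∀ r : ι → R, algebraMap (⨂[k] _ : ι, R) R (tprod k r) = ∏ i, r i)
    (s : ⨂[k] _ : ι, R) :
    towerAlgHom k R (algebraMap _ (⨂[k] _ : ι, A) s) =
      algebraMap R (⨂[R] _ : ι, A) (algebraMap _ R s) := by
  have h : (towerAlgHom k R).toRingHom.comp (algebraMap (⨂[k] _ : ι, R) (⨂[k] _ : ι, A)) =
      (algebraMap R (⨂[R] _ : ι, A)).comp (algebraMap (⨂[k] _ : ι, R) R) :=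
    ringHom_ext fun r => by
      simp only [RingHom.coe_comp, Function.comp_apply, AlgHom.toRingHom_eq_coe,
        RingHom.coe_coe]
      simp_rw [hg, towerAlgHom_tprod, hm, Algebra.algebraMap_eq_smul_one,
        MultilinearMap.map_smul_univ]
      rfl
  exact RingHom.congr_fun h s

variable
  (hg : ∀ r : ι → R, algebraMap (⨂[k] _ : ι, R) (⨂[k] _ : ι, A) (tprod k r) =
    tprod k fun i => algebraMap R A (r i))
  (hm : ∀ r : ι → R, algebraMap (⨂[k] _ : ι, R) R (tprod k r) = ∏ i, r i)

attribute [local instance] Algebra.TensorProduct.rightAlgebra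

noncomputable def tensorPowerPushoutInv :
    (⨂[R] _ : ι, A) →ₐ[R] (⨂[k] _ : ι, A) ⊗[⨂[k] _ : ι, R] R :=
  liftAlgHom
    { toFun := fun a => tprod k a ⊗ₜ 1
      map_update_add' := fun a i x y => by
        simp only [MultilinearMap.map_update_add, TensorProduct.add_tmul]
      map_update_smul' := fun a i r x => by
        have h := tprod_update_smul_tmul_one hg hm (Function.update a i x) i r
        rw [Function.update_self, Function.update_idem] at h
        rw [h, Algebra.TensorProduct.rightAlgebra_smul_tmul, mul_one] }
    rfl fun x y => by
      simp only [MultilinearMap.coe_mk, ← tprod_mul_tprod, Algebra.TensorProduct.tmul_mul_tmul,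
        mul_one]

@[simp]
theorem tensorPowerPushoutInv_tprod (a : ι → A) :
    tensorPowerPushoutInv hg hm (tprod R a) = tprod k a ⊗ₜ 1 :=
  lift.tprod a

variable [IsScalarTower k R A]

noncomputable def tensorPowerPushoutHom [Nonempty ι] :
    (⨂[k] _ : ι, A) ⊗[⨂[k] _ : ι, R] R →+* ⨂[R] _ : ι, A :=
  letI : Algebra (⨂[k] _ : ι, R) (⨂[R] _ : ι, A) :=
    ((algebraMap R _).comp (algebraMap _ R)).toAlgebra
  (Algebra.TensorProduct.productMap
    { towerAlgHom k R with commutes' := towerAlgHom_algebraMap hg hm }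
    { algebraMap R (⨂[R] _ : ι, A) with commutes' := fun _ => rfl }).toRingHom

theorem tensorPowerPushoutHom_tmul [Nonempty ι] (x : ⨂[k] _ : ι, A) (r : R) :
    tensorPowerPushoutHom hg hm (x ⊗ₜ r) = towerAlgHom k R x * algebraMap R _ r :=
  rfl

theorem tensorPowerPushoutHom_comp_inv [Nonempty ι] :
    (tensorPowerPushoutHom hg hm).comp (tensorPowerPushoutInv hg hm).toRingHom =
      RingHom.id _ :=
  ringHom_ext fun a => by
    simp [tensorPowerPushoutHom_tmul]

theorem tensorPowerPushoutInv_comp_hom [Nonempty ι] :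
    (tensorPowerPushoutInv hg hm).toRingHom.comp (tensorPowerPushoutHom hg hm) =
      RingHom.id _ := by
  refine Algebra.TensorProduct.ringHom_ext (ringHom_ext fun a => ?_) (RingHom.ext fun r => ?_)
  · simp [tensorPowerPushoutHom_tmul]
  · simp [tensorPowerPushoutHom_tmul, Algebra.TensorProduct.right_algebraMap_apply]

noncomputable def tensorPowerPushoutEquiv [Nonempty ι] :
    (⨂[k] _ : ι, A) ⊗[⨂[k] _ : ι, R] R ≃+* ⨂[R] _ : ι, A :=
  RingEquiv.ofRingHom (tensorPowerPushoutHom hg hm) (tensorPowerPushoutInv hg hm)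
    (tensorPowerPushoutHom_comp_inv hg hm) (tensorPowerPushoutInv_comp_hom hg hm)

theorem tensorPowerPushoutEquiv_tprod_tmul [Nonempty ι] [DecidableEq ι] (a : ι → A) (r : R)
    (i : ι) :
    tensorPowerPushoutEquiv hg hm (tprod k a ⊗ₜ r) = tprod R (Function.update a i (r • a i)) := by
  rw [← smul_tprod_eq_tprod_update, Algebra.smul_def, mul_comm, ← towerAlgHom_tprod k R a]
  exact tensorPowerPushoutHom_tmul hg hm _ r

end Pushout

end PiTensorProduct

/-- For a homomorphism `R → A` of commutative `k`-algebras and `n ≥ 1`, the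
canonical map `A^{⊗_k n} ⊗_{R^{⊗_k n}} R → A^{⊗_R n}`, determined by
`(a_1 ⊗ ⋯ ⊗ a_n) ⊗ r ↦ a_1 ⊗ ⋯ ⊗ (a_n · r)`, is an isomorphism of commutative
rings.  Here `A^{⊗_k n}` is an `R^{⊗_k n}`-algebra via the map induced by
`R → A` in each factor, and `R` is an `R^{⊗_k n}`-algebra via the iterated
multiplication map. -/
theorem tensor_power_base_change_iso (k R A : Type) [CommRing k] [CommRing R]
    [CommRing A] [Algebra k R] [Algebra k A] (f : R →ₐ[k] A)
    (n : ℕ) (hn : 1 ≤ n)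
    -- the map `R^{⊗_k n} → A^{⊗_k n}` induced by `f` in each factor
    (g : (⨂[k] _ : Fin n, R) →+* (⨂[k] _ : Fin n, A))
    (hg : ∀ r : Fin n → R, g (⨂ₜ[k] i, r i) = ⨂ₜ[k] i, f (r i))
    -- the iterated multiplication map `R^{⊗_k n} → R`
    (m : (⨂[k] _ : Fin n, R) →+* R)
    (hm : ∀ r : Fin n → R, m (⨂ₜ[k] i, r i) = ∏ i, r i) :
    -- `A` is an `R`-algebra via `f`
    letI : Algebra R A := f.toRingHom.toAlgebra
    letI : Algebra (⨂[k] _ : Fin n, R) (⨂[k] _ : Fin n, A) := g.toAlgebra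
    letI : Algebra (⨂[k] _ : Fin n, R) R := m.toAlgebra
    ∃ e : ((⨂[k] _ : Fin n, A) ⊗[⨂[k] _ : Fin n, R] R) ≃+* (⨂[R] _ : Fin n, A),
      ∀ (a : Fin n → A) (r : R),
        e ((⨂ₜ[k] i, a i) ⊗ₜ[⨂[k] _ : Fin n, R] r) =
          ⨂ₜ[R] i, Function.update a ⟨n - 1, by omega⟩ (a ⟨n - 1, by omega⟩ * f r) i := by
  let : Algebra R A := f.toRingHom.toAlgebra
  let : Algebra (⨂[k] _ : Fin n, R) (⨂[k] _ : Fin n, A) := g.toAlgebra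
  let : Algebra (⨂[k] _ : Fin n, R) R := m.toAlgebra
  have : IsScalarTower k R A := .of_algebraMap_eq fun c => (f.commutes c).symm
  have : Nonempty (Fin n) := ⟨⟨0, hn⟩⟩
  refine ⟨tensorPowerPushoutEquiv hg hm, fun a r => ?_⟩
  rw [tensorPowerPushoutEquiv_tprod_tmul hg hm a r ⟨n - 1, by omega⟩, Algebra.smul_def, mul_comm]
  rfl
end

section
/- Let R → A be a homomorphism of commutative rings. There is an isomorphism of simplicial augmented commutative A-algebras B^cy_R(A) ≅ S¹ ⊙_A (A ⊗_R A), natural in R → A, exhibiting the cyclic bar construction of A relative to R as the pointed tensor of the augmented commutative A-algebra A ⊗_R A (with augmentation the multiplication map A ⊗_R A → A and unit the left inclusion A → A ⊗_R A) with the pointed simplicial circle. -/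
open scoped TensorProduct

open PiTensorProduct

set_option maxHeartbeats 1000000
set_option synthInstance.maxHeartbeats 400000

section Defs

variable (A : Type) [CommRing A]

/-- The effect on pure tensors of the `i`-th face map of the cyclic bar
construction: for `i < q + 1` it multiplies the `i`-th and `(i+1)`-st tensor
factors, and the last face map multiplies the last tensor factor into the
first. -/
def cycMerge (q : ℕ) (i : Fin (q + 2)) (a : Fin (q + 2) → A) : Fin (q + 1) → A :=
  if i.val < q + 1 then fun j =>
    if j.val < i.val then a j.castSucc
    else if j.val = i.val then a j.castSucc * a j.succ
    else a j.succ
  else fun j => if j.val = 0 then a (Fin.last (q + 1)) * a 0 else a j.castSucc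

/-- The effect on pure tensors of the `j`-th degeneracy map of the cyclic bar
construction: it inserts a unit `1` after the `j`-th tensor factor. -/
def cycInsert (q : ℕ) (j : Fin (q + 1)) (a : Fin (q + 1) → A) : Fin (q + 2) → A :=
  fun m =>
    if h1 : m.val ≤ j.val then a ⟨m.val, by have := j.isLt; omega⟩
    else if h2 : m.val = j.val + 1 then 1
    else a ⟨m.val - 1, by have := m.isLt; omega⟩

/-- The face maps of the simplicial circle `S¹ = Δ[1]/∂Δ[1]`, whose set of
`q`-simplices is modelled by `Fin (q + 1)` with `0` the basepoint. -/
def circFace (q : ℕ) (i : Fin (q + 2)) (k : Fin (q + 2)) : Fin (q + 1) :=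
  if k.val = 0 then 0
  else if k.val ≤ i.val then
    (if h : k.val = q + 1 then 0 else ⟨k.val, by have := k.isLt; omega⟩)
  else (if k.val = 1 then 0 else ⟨k.val - 1, by have := k.isLt; omega⟩)

/-- The degeneracy maps of the simplicial circle `S¹` in the model above. -/
def circDegen (q : ℕ) (j : Fin (q + 1)) (k : Fin (q + 1)) : Fin (q + 2) :=
  if k.val = 0 then 0
  else if k.val ≤ j.val then ⟨k.val, by have := k.isLt; omega⟩
  else ⟨k.val + 1, by have := k.isLt; omega⟩

/-- Given a map of index sets `φ` and factors `a x`, the factors of the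
induced map on tensor powers: the `y`-th factor is the product of the `a x`
over the fiber of `φ` at `y`. -/
def fiberMul {m n : ℕ} (φ : Fin m → Fin n) (a : Fin m → A) : Fin n → A :=
  fun y => ∏ x ∈ Finset.univ.filter (fun x => φ x = y), a x

end Defs

/-- `iA, iY` exhibit `P` as the pushout in commutative rings of the diagram
`A ← C → Y` given by `a : C →+* A` and `b : C →+* Y`. -/
def IsRingPushout {C A Y P : Type} [CommRing C] [CommRing A] [CommRing Y]
    [CommRing P] (a : C →+* A) (b : C →+* Y) (iA : A →+* P) (iY : Y →+* P) :
    Prop :=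
  iA.comp a = iY.comp b ∧
    ∀ (H : Type) [CommRing H] (jA : A →+* H) (jY : Y →+* H),
      jA.comp a = jY.comp b → ∃! h : P →+* H, h.comp iA = jA ∧ h.comp iY = jY

noncomputable section CycAux

variable {R A : Type} [CommRing R] [CommRing A] [Algebra R A]

abbrev TT (R A : Type) [CommRing R] [CommRing A] [Algebra R A] (q : ℕ) : Type :=
  ⨂[R] _ : Fin (q + 1), A

abbrev YY (R A : Type) [CommRing R] [CommRing A] [Algebra R A] (q : ℕ) : Type :=
  ⨂[A] _ : Fin (q + 1), (A ⊗[R] A)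

def phiX (q : ℕ) (x : Fin (q + 1)) : (A ⊗[R] A) →ₐ[R] TT R A q :=
  Algebra.TensorProduct.productMap
    (PiTensorProduct.singleAlgHom (R := R) (A := fun _ : Fin (q + 1) => A) 0)
    (PiTensorProduct.singleAlgHom (R := R) (A := fun _ : Fin (q + 1) => A) x)

instance instAlgATT (q : ℕ) : Algebra A (TT R A q) :=
  ((PiTensorProduct.singleAlgHom (R := R) (A := fun _ : Fin (q + 1) => A)
    0).toRingHom).toAlgebra

lemma algebraMapTT (q : ℕ) (a : A) :
    algebraMap A (TT R A q) a
      = tprod R (Pi.mulSingle (M := fun _ : Fin (q+1) => A) 0 a) := rfl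

def lamX (q : ℕ) (x : Fin (q + 1)) : (A ⊗[R] A) →ₗ[A] TT R A q where
  toFun := phiX q x
  map_add' u v := map_add _ u v
  map_smul' a u := by
    show phiX q x (a • u) = a • phiX q x u
    rw [Algebra.smul_def, Algebra.smul_def, _root_.map_mul]
    congr 1
    rw [Algebra.TensorProduct.algebraMap_apply, algebraMapTT]
    show (phiX q x) (a ⊗ₜ[R] 1) = _
    rw [phiX, Algebra.TensorProduct.productMap_apply_tmul, _root_.map_one, mul_one]
    rfl
def jYhom (q : ℕ) : YY R A q →+* TT R A q :=
  (PiTensorProduct.liftAlgHom (R := A)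
    ((MultilinearMap.mkPiAlgebra A (Fin (q + 1)) (TT R A q)).compLinearMap
      (fun x => lamX q x))
    (by
      simp only [MultilinearMap.compLinearMap_apply, MultilinearMap.mkPiAlgebra_apply]
      rw [Finset.prod_eq_one]
      intro x _
      exact _root_.map_one (phiX (R := R) (A := A) q x))
    (by
      intro u v
      simp only [MultilinearMap.compLinearMap_apply, MultilinearMap.mkPiAlgebra_apply,
        Pi.mul_apply]
      rw [← Finset.prod_mul_distrib]
      refine Finset.prod_congr rfl fun x _ => ?_
      exact _root_.map_mul (phiX (R := R) (A := A) q x) (u x) (v x))).toRingHom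

lemma singleAlgHom_eq (q : ℕ) (i : Fin (q + 1)) (a : A) :
    PiTensorProduct.singleAlgHom (R := R) (A := fun _ : Fin (q + 1) => A) i a
      = tprod R (Pi.mulSingle (M := fun _ : Fin (q + 1) => A) i a) := rfl

lemma jYhom_tprod (q : ℕ) (b c : Fin (q + 1) → A) :
    jYhom q (tprod A (fun x => b x ⊗ₜ[R] c x))
      = tprod R (fun j => if j = 0 then (∏ x, b x) * c 0 else c j) := by
  rw [jYhom]
  show PiTensorProduct.liftAlgHom _ _ _ (PiTensorProduct.tprod A _) = _
  rw [PiTensorProduct.liftAlgHom_apply, PiTensorProduct.lift.tprod]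
  simp only [MultilinearMap.compLinearMap_apply, MultilinearMap.mkPiAlgebra_apply]
  have h1 : ∀ x : Fin (q + 1), lamX (R := R) (A := A) q x (b x ⊗ₜ[R] c x)
      = PiTensorProduct.singleAlgHom (R := R) (A := fun _ : Fin (q + 1) => A) 0 (b x)
        * PiTensorProduct.singleAlgHom (R := R) (A := fun _ : Fin (q + 1) => A) x (c x) := by
    intro x
    show phiX (R := R) (A := A) q x (b x ⊗ₜ[R] c x) = _
    rw [phiX, Algebra.TensorProduct.productMap_apply_tmul]
  rw [Finset.prod_congr rfl (fun x _ => h1 x), Finset.prod_mul_distrib, ← _root_.map_prod]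
  have h2 : (∏ x : Fin (q + 1),
      PiTensorProduct.singleAlgHom (R := R) (A := fun _ : Fin (q + 1) => A) x (c x))
      = tprod R c := by
    simp only [singleAlgHom_eq]
    rw [← PiTensorProduct.tprod_prod, Finset.univ_prod_mulSingle]
  rw [h2, singleAlgHom_eq, PiTensorProduct.tprod_mul_tprod]
  congr 1
  funext j
  simp only [Pi.mul_apply, Pi.mulSingle_apply]
  by_cases hj : j = 0
  · subst hj; simp
  · simp [hj]
def psiJ (q : ℕ) {Pq : Type} [CommRing Pq] (iY : YY R A q →+* Pq) (j : Fin (q + 1)) :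
    A →+* Pq :=
  iY.comp ((PiTensorProduct.singleAlgHom (R := A)
      (A := fun _ : Fin (q + 1) => A ⊗[R] A) j).toRingHom.comp
    (Algebra.TensorProduct.includeRight (R := R) (A := A) (B := A)).toRingHom)

lemma psiJ_apply (q : ℕ) {Pq : Type} [CommRing Pq] (iY : YY R A q →+* Pq)
    (j : Fin (q + 1)) (a : A) :
    psiJ q iY j a = iY (tprod A
      (Pi.mulSingle (M := fun _ : Fin (q + 1) => A ⊗[R] A) j ((1 : A) ⊗ₜ[R] a))) := rfl

lemma psiJ_commutes (q : ℕ) {Pq : Type} [CommRing Pq] (iA : A →+* Pq)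
    (iY : YY R A q →+* Pq)
    (hsq : ∀ z : A, iY (algebraMap A (YY R A q) z) = iA z) (j : Fin (q + 1)) (r : R) :
    psiJ q iY j (algebraMap R A r) = iA (algebraMap R A r) := by
  rw [psiJ_apply]
  have h1 : (1 : A) ⊗ₜ[R] (algebraMap R A r) = algebraMap A (A ⊗[R] A) (algebraMap R A r) := by
    rw [Algebra.TensorProduct.algebraMap_apply, Algebra.algebraMap_eq_smul_one (A := A),
      ← TensorProduct.smul_tmul]
    simp
  rw [h1]
  have h2 : tprod A (Pi.mulSingle (M := fun _ : Fin (q + 1) => A ⊗[R] A) j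
        (algebraMap A (A ⊗[R] A) (algebraMap R A r)))
      = algebraMap A (YY R A q) (algebraMap R A r) :=
    (PiTensorProduct.singleAlgHom (R := A)
      (A := fun _ : Fin (q + 1) => A ⊗[R] A) j).commutes (algebraMap R A r)
  rw [h2, hsq]

def ghom (q : ℕ) {Pq : Type} [CommRing Pq] (iA : A →+* Pq) (iY : YY R A q →+* Pq)
    (hsq : ∀ z : A, iY (algebraMap A (YY R A q) z) = iA z) : TT R A q →+* Pq :=
  letI : Algebra R Pq := (iA.comp (algebraMap R A)).toAlgebra
  letI psi : ∀ _ : Fin (q + 1), A →ₐ[R] Pq := fun j =>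
    { toRingHom := psiJ q iY j
      commutes' := fun r => psiJ_commutes q iA iY hsq j r }
  (PiTensorProduct.liftAlgHom (R := R)
    ((MultilinearMap.mkPiAlgebra R (Fin (q + 1)) Pq).compLinearMap
      (fun j => (psi j).toLinearMap))
    (by
      simp only [MultilinearMap.compLinearMap_apply, MultilinearMap.mkPiAlgebra_apply]
      rw [Finset.prod_eq_one]
      intro j _
      exact _root_.map_one (psiJ (R := R) (A := A) q iY j))
    (by
      intro u v
      simp only [MultilinearMap.compLinearMap_apply, MultilinearMap.mkPiAlgebra_apply,
        Pi.mul_apply]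
      rw [← Finset.prod_mul_distrib]
      exact Finset.prod_congr rfl fun j _ =>
        _root_.map_mul (psiJ (R := R) (A := A) q iY j) (u j) (v j))).toRingHom

lemma ghom_tprod (q : ℕ) {Pq : Type} [CommRing Pq] (iA : A →+* Pq)
    (iY : YY R A q →+* Pq)
    (hsq : ∀ z : A, iY (algebraMap A (YY R A q) z) = iA z) (a : Fin (q + 1) → A) :
    ghom q iA iY hsq (tprod R a) = iY (tprod A (fun x => (1 : A) ⊗ₜ[R] a x)) := by
  letI : Algebra R Pq := (iA.comp (algebraMap R A)).toAlgebra
  rw [ghom]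
  show PiTensorProduct.liftAlgHom _ _ _ (tprod R a) = _
  rw [PiTensorProduct.liftAlgHom_apply, PiTensorProduct.lift.tprod]
  simp only [MultilinearMap.compLinearMap_apply, MultilinearMap.mkPiAlgebra_apply]
  have key : iY (tprod A (fun x => (1 : A) ⊗ₜ[R] a x))
      = ∏ j, iY (tprod A (Pi.mulSingle (M := fun _ : Fin (q + 1) => A ⊗[R] A) j
          ((1 : A) ⊗ₜ[R] a j))) := by
    rw [← _root_.map_prod, ← PiTensorProduct.tprod_prod,
      Finset.univ_prod_mulSingle (f := fun x : Fin (q + 1) => (1 : A) ⊗ₜ[R] a x)]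
  rw [key]
  exact Finset.prod_congr rfl fun j _ => rfl
lemma ext_ringHom_tensor {H : Type} [CommRing H] (g1 g2 : (A ⊗[R] A) →+* H)
    (h : ∀ b c : A, g1 (b ⊗ₜ[R] c) = g2 (b ⊗ₜ[R] c)) : g1 = g2 := by
  refine RingHom.ext fun u => ?_
  induction u using TensorProduct.induction_on with
  | zero => simp
  | tmul b c => exact h b c
  | add u v hu hv => rw [map_add, map_add, hu, hv]

lemma extT (q : ℕ) {H : Type} [CommRing H] (g1 g2 : TT R A q →+* H)
    (h : ∀ a : Fin (q + 1) → A, g1 (tprod R a) = g2 (tprod R a)) : g1 = g2 := by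
  refine RingHom.ext fun u => ?_
  induction u using PiTensorProduct.induction_on with
  | smul_tprod r m =>
      have h0 : tprod R (Function.update m 0 (r • m 0)) = r • tprod R m := by
        rw [MultilinearMap.map_update_smul, Function.update_eq_self]
      rw [← h0]
      exact h _
  | add u v hu hv => rw [map_add, map_add, hu, hv]

lemma extY (q : ℕ) {H : Type} [CommRing H] (g1 g2 : YY R A q →+* H)
    (h : ∀ b c : Fin (q + 1) → A,
      g1 (tprod A (fun x => b x ⊗ₜ[R] c x)) = g2 (tprod A (fun x => b x ⊗ₜ[R] c x))) :
    g1 = g2 := by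
  have main : ∀ (k : ℕ) (m : Fin (q + 1) → A ⊗[R] A),
      (∀ x : Fin (q + 1), k ≤ x.val → ∃ b c, m x = b ⊗ₜ[R] c) →
      g1 (tprod A m) = g2 (tprod A m) := by
    intro k
    induction k with
    | zero =>
        intro m hm
        choose b c hbc using fun x => hm x (Nat.zero_le _)
        have hme : m = fun x => b x ⊗ₜ[R] c x := funext hbc
        rw [hme]
        exact h b c
    | succ k ih =>
        intro m hm
        by_cases hk : k < q + 1
        · have hsub : ∀ u : A ⊗[R] A,
              g1 (tprod A (Function.update m ⟨k, hk⟩ u))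
                = g2 (tprod A (Function.update m ⟨k, hk⟩ u)) := by
            intro u
            induction u using TensorProduct.induction_on with
            | zero => rw [MultilinearMap.map_update_zero, map_zero, map_zero]
            | tmul b c =>
                apply ih
                intro x hx
                rcases eq_or_ne x ⟨k, hk⟩ with hxk | hxk
                · rw [hxk, Function.update_self]
                  exact ⟨b, c, rfl⟩
                · rw [Function.update_of_ne hxk]
                  refine hm x ?_
                  have hxv : x.val ≠ k := fun hh => hxk (Fin.ext hh)
                  omega
            | add u v hu hv =>
                rw [MultilinearMap.map_update_add, map_add, map_add, hu, hv]
          have hfin := hsub (m ⟨k, hk⟩)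
          rwa [Function.update_eq_self] at hfin
        · exact ih m fun x hx => absurd hx (by have := x.isLt; omega)
  refine RingHom.ext fun u => ?_
  induction u using PiTensorProduct.induction_on with
  | smul_tprod a m =>
      have h0 : tprod A (Function.update m 0 (a • m 0)) = a • tprod A m := by
        rw [MultilinearMap.map_update_smul, Function.update_eq_self]
      rw [← h0]
      exact main (q + 2) _ fun x hx => absurd hx (by have := x.isLt; omega)
  | add u v hu hv => rw [map_add, map_add, hu, hv]
lemma prod_fiberMul {B : Type} [CommRing B] {m n : ℕ} (φ : Fin m → Fin n) (b : Fin m → B) :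
    ∏ y, fiberMul B φ b y = ∏ x, b x := by
  unfold fiberMul
  exact Finset.prod_fiberwise _ _ _

lemma fiberMul_tmul {m n : ℕ} (φ : Fin m → Fin n) (b c : Fin m → A) (y : Fin n) :
    fiberMul (A ⊗[R] A) φ (fun x => b x ⊗ₜ[R] c x) y
      = (fiberMul A φ b y) ⊗ₜ[R] (fiberMul A φ c y) := by
  unfold fiberMul
  have key : ∀ s : Finset (Fin m), ∏ x ∈ s, (b x ⊗ₜ[R] c x)
      = (∏ x ∈ s, b x) ⊗ₜ[R] (∏ x ∈ s, c x) := by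
    intro s
    induction s using Finset.induction_on with
    | empty => simp [Algebra.TensorProduct.one_def]
    | insert _ _ hx ih =>
        rw [Finset.prod_insert hx, Finset.prod_insert hx, Finset.prod_insert hx, ih,
          Algebra.TensorProduct.tmul_mul_tmul]
  exact key _

end CycAux
section Comb

variable {A : Type} [CommRing A]

lemma fiberMul_eq_single {m n : ℕ} (φ : Fin m → Fin n) (c : Fin m → A) (y : Fin n)
    (k0 : Fin m) (h : ∀ k, φ k = y ↔ k = k0) : fiberMul A φ c y = c k0 := by
  unfold fiberMul
  rw [show Finset.univ.filter (fun k => φ k = y) = {k0} by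
    ext k; simp [h k]]
  exact Finset.prod_singleton _ _

lemma fiberMul_eq_pair {m n : ℕ} (φ : Fin m → Fin n) (c : Fin m → A) (y : Fin n)
    (k0 k1 : Fin m) (hne : k0 ≠ k1) (h : ∀ k, φ k = y ↔ (k = k0 ∨ k = k1)) :
    fiberMul A φ c y = c k0 * c k1 := by
  unfold fiberMul
  rw [show Finset.univ.filter (fun k => φ k = y) = {k0, k1} by
    ext k; simp [h k]]
  exact Finset.prod_pair hne

lemma fiberMul_eq_empty {m n : ℕ} (φ : Fin m → Fin n) (c : Fin m → A) (y : Fin n)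
    (h : ∀ k, φ k ≠ y) : fiberMul A φ c y = 1 := by
  unfold fiberMul
  rw [show Finset.univ.filter (fun k => φ k = y) = ∅ by
    ext k; simp [h k]]
  exact Finset.prod_empty

lemma circFace_val (q : ℕ) (i : Fin (q + 2)) (k : Fin (q + 2)) :
    (circFace q i k).val =
      if k.val = 0 then 0
      else if k.val ≤ i.val then (if k.val = q + 1 then 0 else k.val)
      else (if k.val = 1 then 0 else k.val - 1) := by
  unfold circFace
  split_ifs <;> simp_all

lemma circDegen_val (q : ℕ) (j : Fin (q + 1)) (k : Fin (q + 1)) :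
    (circDegen q j k).val =
      if k.val = 0 then 0
      else if k.val ≤ j.val then k.val
      else k.val + 1 := by
  unfold circDegen
  split_ifs <;> simp_all

lemma merge_key (q : ℕ) (i : Fin (q + 2)) (K : A) (c : Fin (q + 2) → A) (y : Fin (q + 1)) :
    cycMerge A q i (fun j => if j = 0 then K * c 0 else c j) y
      = if y = 0 then K * fiberMul A (circFace q i) c y
        else fiberMul A (circFace q i) c y := by
  have hiv := i.isLt
  have hyv := y.isLt
  by_cases hi : i.val < q + 1
  · rw [show cycMerge A q i (fun j => if j = 0 then K * c 0 else c j) y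
        = (if y.val < i.val then (if y.castSucc = 0 then K * c 0 else c y.castSucc)
          else if y.val = i.val then
            (if y.castSucc = 0 then K * c 0 else c y.castSucc) *
            (if y.succ = 0 then K * c 0 else c y.succ)
          else (if y.succ = 0 then K * c 0 else c y.succ)) by
      simp only [cycMerge, if_pos hi]]
    by_cases hy0 : y.val = 0
    · have hy0' : y = 0 := by rwa [Fin.ext_iff, Fin.val_zero]
      by_cases hi0 : i.val = 0
      · -- pair {0, 1}
        rw [if_neg (by omega), if_pos (by omega), if_pos hy0',
          if_pos (by rw [Fin.ext_iff]; simpa using hy0),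
          if_neg (by rw [Fin.ext_iff]; simp),
          fiberMul_eq_pair _ _ _ 0 ⟨1, by omega⟩ (by rw [Ne, Fin.ext_iff]; simp)]
        · rw [show y.succ = ⟨1, by omega⟩ by rw [Fin.ext_iff]; simpa using hy0]
          ring
        · intro k
          have hkv := k.isLt
          rw [Fin.ext_iff, Fin.ext_iff, Fin.ext_iff, circFace_val]
          simp only [Fin.val_zero]
          split_ifs <;> omega
      · -- single {0}
        rw [if_pos (by omega), if_pos (by rw [Fin.ext_iff]; simpa using hy0), if_pos hy0',
          fiberMul_eq_single _ _ _ 0]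
        intro k
        have hkv := k.isLt
        rw [Fin.ext_iff, Fin.ext_iff, circFace_val]
        simp only [Fin.val_zero]
        split_ifs <;> omega
    · have hy0' : ¬(y = 0) := by rw [Fin.ext_iff, Fin.val_zero]; exact hy0
      rw [if_neg hy0']
      by_cases hy1 : y.val < i.val
      · rw [if_pos hy1, if_neg (by rw [Fin.ext_iff]; simpa using hy0),
          fiberMul_eq_single _ _ _ y.castSucc]
        intro k
        have hkv := k.isLt
        rw [Fin.ext_iff, Fin.ext_iff, circFace_val]
        simp only [Fin.coe_castSucc]
        split_ifs <;> omega
      · by_cases hy2 : y.val = i.val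
        · rw [if_neg hy1, if_pos hy2, if_neg (by rw [Fin.ext_iff]; simpa using hy0),
            if_neg (by rw [Fin.ext_iff]; simp),
            fiberMul_eq_pair _ _ _ y.castSucc y.succ
              (by rw [Ne, Fin.ext_iff, Fin.coe_castSucc, Fin.val_succ]; omega)]
          intro k
          have hkv := k.isLt
          rw [Fin.ext_iff, Fin.ext_iff, Fin.ext_iff, circFace_val]
          simp only [Fin.coe_castSucc, Fin.val_succ]
          split_ifs <;> omega
        · rw [if_neg hy1, if_neg hy2, if_neg (by rw [Fin.ext_iff]; simp),
            fiberMul_eq_single _ _ _ y.succ]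
          intro k
          have hkv := k.isLt
          rw [Fin.ext_iff, Fin.ext_iff, circFace_val]
          simp only [Fin.val_succ]
          split_ifs <;> omega
  · -- i.val = q + 1
    rw [show cycMerge A q i (fun j => if j = 0 then K * c 0 else c j) y
        = (if y.val = 0 then
            (if Fin.last (q+1) = 0 then K * c 0 else c (Fin.last (q+1))) *
            (if (0 : Fin (q+2)) = 0 then K * c 0 else c 0)
          else (if y.castSucc = 0 then K * c 0 else c y.castSucc)) by
      simp only [cycMerge, if_neg hi]]
    by_cases hy0 : y.val = 0
    · have hy0' : y = 0 := by rwa [Fin.ext_iff, Fin.val_zero]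
      rw [if_pos hy0, if_pos hy0', if_neg (by rw [Fin.ext_iff]; simp), if_pos rfl,
        fiberMul_eq_pair _ _ _ 0 (Fin.last (q+1))
          (by rw [Ne, Fin.ext_iff]; simp)]
      · ring
      · intro k
        have hkv := k.isLt
        rw [Fin.ext_iff, Fin.ext_iff, Fin.ext_iff, circFace_val]
        simp only [Fin.val_zero, Fin.val_last]
        split_ifs <;> omega
    · have hy0' : ¬(y = 0) := by rw [Fin.ext_iff, Fin.val_zero]; exact hy0
      rw [if_neg hy0, if_neg hy0', if_neg (by rw [Fin.ext_iff]; simpa using hy0),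
        fiberMul_eq_single _ _ _ y.castSucc]
      intro k
      have hkv := k.isLt
      rw [Fin.ext_iff, Fin.ext_iff, circFace_val]
      simp only [Fin.coe_castSucc]
      split_ifs <;> omega

lemma insert_key (q : ℕ) (j : Fin (q + 1)) (K : A) (c : Fin (q + 1) → A) (y : Fin (q + 2)) :
    cycInsert A q j (fun m => if m = 0 then K * c 0 else c m) y
      = if y = 0 then K * fiberMul A (circDegen q j) c y
        else fiberMul A (circDegen q j) c y := by
  have hjv := j.isLt
  have hyv := y.isLt
  unfold cycInsert
  by_cases hy0 : y.val = 0
  · have hy0' : y = 0 := by rwa [Fin.ext_iff, Fin.val_zero]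
    rw [dif_pos (by omega)]
    beta_reduce
    rw [if_pos (show (⟨y.val, by omega⟩ : Fin (q+1)) = 0 by
        simp only [Fin.ext_iff, Fin.val_zero]; omega),
      if_pos hy0', fiberMul_eq_single _ _ _ 0]
    intro k
    have hkv := k.isLt
    simp only [Fin.ext_iff, circDegen_val, Fin.val_zero]
    split_ifs <;> omega
  · have hy0' : ¬(y = 0) := by rw [Fin.ext_iff, Fin.val_zero]; exact hy0
    rw [if_neg hy0']
    by_cases hy1 : y.val ≤ j.val
    · rw [dif_pos hy1]
      beta_reduce
      rw [if_neg (show ¬((⟨y.val, by omega⟩ : Fin (q+1)) = 0) by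
          simp only [Fin.ext_iff, Fin.val_zero]; omega),
        fiberMul_eq_single _ _ _ ⟨y.val, by omega⟩]
      intro k
      have hkv := k.isLt
      simp only [Fin.ext_iff, circDegen_val, Fin.val_zero]
      split_ifs <;> omega
    · by_cases hy2 : y.val = j.val + 1
      · rw [dif_neg hy1, dif_pos hy2, fiberMul_eq_empty _ _ _ (by
          intro k
          have hkv := k.isLt
          simp only [Ne, Fin.ext_iff, circDegen_val, Fin.val_zero]
          split_ifs <;> omega)]
      · rw [dif_neg hy1, dif_neg hy2]
        beta_reduce
        rw [if_neg (show ¬((⟨y.val - 1, by omega⟩ : Fin (q+1)) = 0) by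
            simp only [Fin.ext_iff, Fin.val_zero]; omega),
          fiberMul_eq_single _ _ _ ⟨y.val - 1, by omega⟩]
        intro k
        have hkv := k.isLt
        simp only [Fin.ext_iff, circDegen_val, Fin.val_zero]
        split_ifs <;> omega

end Comb
/-- For a homomorphism `R → A` of commutative rings there is an isomorphism of
simplicial augmented commutative `A`-algebras `B^cy_R(A) ≅ S¹ ⊙_A (A ⊗_R A)`,
natural in `R → A`, exhibiting the cyclic bar construction of `A` relative to
`R` as the pointed tensor of the augmented commutative `A`-algebra `A ⊗_R A`
(with augmentation the multiplication map and unit the left inclusion) with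
the pointed simplicial circle.  The pointed tensor is given in degree `q` by
the pushout `P q` of `A ← A ⊗_R A → (A ⊗_R A)^{⊗_A S¹_q}`, where `A ⊗_R A`
maps to the tensor power as the factor indexed by the basepoint of `S¹_q` and
to `A` by the augmentation. -/
theorem cyclic_bar_iso_pointed_circle_tensor (R A : Type) [CommRing R]
    [CommRing A] (f : R →+* A) :
    letI : Algebra R A := f.toAlgebra
    -- the augmentation (multiplication map) `A ⊗_R A → A`
    ∀ (lm : (A ⊗[R] A) →+* A), (∀ a b : A, lm (a ⊗ₜ[R] b) = a * b) →
    -- the basepoint inclusions `A ⊗_R A → (A ⊗_R A)^{⊗_A S¹_q}`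
    ∀ (ι : ∀ q : ℕ, (A ⊗[R] A) →+* ⨂[A] _ : Fin (q + 1), (A ⊗[R] A)),
      (∀ (q : ℕ) (c : A ⊗[R] A),
        ι q c = ⨂ₜ[A] x, (if x = 0 then c else 1)) →
    -- the degreewise pushouts `P q = A ⊗_{A ⊗_R A} ((A ⊗_R A)^{⊗_A S¹_q})`
    ∀ (P : ℕ → Type) (instP : ∀ q : ℕ, CommRing (P q)),
    ∀ (iA : ∀ q : ℕ, A →+* P q)
      (iY : ∀ q : ℕ, (⨂[A] _ : Fin (q + 1), (A ⊗[R] A)) →+* P q),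
      (∀ q : ℕ, IsRingPushout (lm) (ι q) (iA q) (iY q)) →
    -- the face and degeneracy maps of `S¹ ⊙_A (A ⊗_R A)`, induced by the
    -- simplicial structure of `S¹`
    ∀ (DX : ∀ (q : ℕ), Fin (q + 2) → (P (q + 1) →+* P q)),
      (∀ (q : ℕ) (i : Fin (q + 2)) (a : A) (m : Fin (q + 2) → A ⊗[R] A),
        DX q i (iA (q + 1) a * iY (q + 1) (⨂ₜ[A] x, m x)) =
          iA q a * iY q (⨂ₜ[A] y, fiberMul (A ⊗[R] A) (circFace q i) m y)) →
    ∀ (SX : ∀ (q : ℕ), Fin (q + 1) → (P q →+* P (q + 1))),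
      (∀ (q : ℕ) (j : Fin (q + 1)) (a : A) (m : Fin (q + 1) → A ⊗[R] A),
        SX q j (iA q a * iY q (⨂ₜ[A] x, m x)) =
          iA (q + 1) a * iY (q + 1) (⨂ₜ[A] y, fiberMul (A ⊗[R] A) (circDegen q j) m y)) →
    -- the face and degeneracy maps of `B^cy_R(A)`
    ∀ (dC : ∀ (q : ℕ), Fin (q + 2) →
        ((⨂[R] _ : Fin (q + 2), A) →+* ⨂[R] _ : Fin (q + 1), A)),
      (∀ (q : ℕ) (i : Fin (q + 2)) (a : Fin (q + 2) → A),
        dC q i (⨂ₜ[R] x, a x) = ⨂ₜ[R] y, cycMerge A q i a y) →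
    ∀ (sC : ∀ (q : ℕ), Fin (q + 1) →
        ((⨂[R] _ : Fin (q + 1), A) →+* ⨂[R] _ : Fin (q + 2), A)),
      (∀ (q : ℕ) (j : Fin (q + 1)) (a : Fin (q + 1) → A),
        sC q j (⨂ₜ[R] x, a x) = ⨂ₜ[R] y, cycInsert A q j a y) →
    -- the augmentations of both sides to `A`
    ∀ (augX : ∀ q : ℕ, P q →+* A),
      (∀ (q : ℕ) (a : A) (b c : Fin (q + 1) → A),
        augX q (iA q a * iY q (⨂ₜ[A] x, (b x ⊗ₜ[R] c x))) = a * ∏ x, (b x * c x)) →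
    ∀ (augC : ∀ q : ℕ, (⨂[R] _ : Fin (q + 1), A) →+* A),
      (∀ (q : ℕ) (a : Fin (q + 1) → A), augC q (⨂ₜ[R] x, a x) = ∏ x, a x) →
    -- the unit map from `A` of the cyclic bar construction (the unit of the
    -- pointed tensor side is `iA`)
    ∀ (unitC : ∀ q : ℕ, A →+* ⨂[R] _ : Fin (q + 1), A),
      (∀ (q : ℕ) (a : A), unitC q a = ⨂ₜ[R] x, (if x = 0 then a else 1)) →
    ∃ E : ∀ q : ℕ, P q ≃+* (⨂[R] _ : Fin (q + 1), A),
      -- the levelwise formula: the basepoint factor and the `A`-factor are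
      -- merged into the zeroth tensor factor
      (∀ (q : ℕ) (a : A) (b c : Fin (q + 1) → A),
        E q (iA q a * iY q (⨂ₜ[A] x, (b x ⊗ₜ[R] c x))) =
          ⨂ₜ[R] j, (if j = 0 then a * (∏ x, b x) * c 0 else c j)) ∧
      -- compatibility with the simplicial structure maps
      (∀ (q : ℕ) (i : Fin (q + 2)),
        (E q).toRingHom.comp (DX q i) = (dC q i).comp (E (q + 1)).toRingHom) ∧
      (∀ (q : ℕ) (j : Fin (q + 1)),
        (E (q + 1)).toRingHom.comp (SX q j) = (sC q j).comp (E q).toRingHom) ∧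
      -- compatibility with the augmentations and the units from `A`
      (∀ q : ℕ, (augC q).comp (E q).toRingHom = augX q) ∧
      (∀ q : ℕ, (E q).toRingHom.comp (iA q) = unitC q) ∧
      -- naturality in the map `R → A`
      (∀ (R' A' : Type) (instR' : CommRing R') (instA' : CommRing A')
        (f' : R' →+* A') (gR : R →+* R') (gA : A →+* A'),
        gA.comp f = f'.comp gR →
        letI : Algebra R' A' := f'.toAlgebra
        ∀ (lm' : (A' ⊗[R'] A') →+* A'), (∀ a b : A', lm' (a ⊗ₜ[R'] b) = a * b) →
        ∀ (ι' : ∀ q : ℕ, (A' ⊗[R'] A') →+* ⨂[A'] _ : Fin (q + 1), (A' ⊗[R'] A')),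
          (∀ (q : ℕ) (c : A' ⊗[R'] A'),
            ι' q c = ⨂ₜ[A'] x, (if x = 0 then c else 1)) →
        ∀ (P' : ℕ → Type) (instP' : ∀ q : ℕ, CommRing (P' q)),
        ∀ (iA' : ∀ q : ℕ, A' →+* P' q)
          (iY' : ∀ q : ℕ, (⨂[A'] _ : Fin (q + 1), (A' ⊗[R'] A')) →+* P' q),
          (∀ q : ℕ, IsRingPushout (lm') (ι' q) (iA' q) (iY' q)) →
        -- the transfer maps induced by `(gR, gA)` on the two constructions
        ∀ (TP : ∀ q : ℕ, P q →+* P' q),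
          (∀ (q : ℕ) (a : A) (b c : Fin (q + 1) → A),
            TP q (iA q a * iY q (⨂ₜ[A] x, (b x ⊗ₜ[R] c x))) =
              iA' q (gA a) * iY' q (⨂ₜ[A'] x, (gA (b x) ⊗ₜ[R'] gA (c x)))) →
        ∀ (TB : ∀ q : ℕ, (⨂[R] _ : Fin (q + 1), A) →+* ⨂[R'] _ : Fin (q + 1), A'),
          (∀ (q : ℕ) (a : Fin (q + 1) → A),
            TB q (⨂ₜ[R] x, a x) = ⨂ₜ[R'] x, gA (a x)) →
        -- the isomorphism for `R' → A'`
        ∀ (E' : ∀ q : ℕ, P' q ≃+* (⨂[R'] _ : Fin (q + 1), A')),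
          (∀ (q : ℕ) (a : A') (b c : Fin (q + 1) → A'),
            E' q (iA' q a * iY' q (⨂ₜ[A'] x, (b x ⊗ₜ[R'] c x))) =
              ⨂ₜ[R'] j, (if j = 0 then a * (∏ x, b x) * c 0 else c j)) →
          ∀ q : ℕ, (TB q).comp (E q).toRingHom = (E' q).toRingHom.comp (TP q)) := by

  letI : Algebra R A := f.toAlgebra
  intro lm hlm ι hι P instP iA iY hP DX hDX SX hSX dC hdC sC hsC augX haugX augC haugC
    unitC hunitC
  -- the pushout square applied elementwise
  have hsq0 : ∀ (q : ℕ) (c : A ⊗[R] A), iA q (lm c) = iY q (ι q c) := by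
    intro q c
    have h := (hP q).1
    calc iA q (lm c) = ((iA q).comp lm) c := rfl
      _ = ((iY q).comp (ι q)) c := by rw [h]
      _ = iY q (ι q c) := rfl
  have hsingle : ∀ (q : ℕ) (v : A ⊗[R] A),
      iY q (tprod A (Pi.mulSingle (M := fun _ : Fin (q + 1) => A ⊗[R] A) 0 v))
        = iA q (lm v) := by
    intro q v
    have h1 : tprod A (Pi.mulSingle (M := fun _ : Fin (q + 1) => A ⊗[R] A) 0 v) = ι q v := by
      rw [hι]
      congr 1
      funext x
      rw [Pi.mulSingle_apply]
    rw [h1, hsq0]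
  have hsq : ∀ (q : ℕ) (z : A), iY q (algebraMap A (YY R A q) z) = iA q z := by
    intro q z
    rw [PiTensorProduct.algebraMap_apply (R' := A) z (0 : Fin (q + 1))]
    have h2 : algebraMap A (A ⊗[R] A) z = z ⊗ₜ[R] (1 : A) := by
      rw [Algebra.TensorProduct.algebraMap_apply]
      simp
    rw [h2, hsingle, hlm, mul_one]
  have hkey : ∀ (q : ℕ) (b c : Fin (q + 1) → A),
      iY q (tprod A fun x => b x ⊗ₜ[R] c x)
        = iA q (∏ x, b x) * iY q (tprod A fun x => (1 : A) ⊗ₜ[R] c x) := by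
    intro q b c
    have h1 : (tprod A (fun x => b x ⊗ₜ[R] c x) : YY R A q)
        = tprod A (fun x : Fin (q + 1) => (b x) ⊗ₜ[R] (1 : A))
          * tprod A (fun x : Fin (q + 1) => (1 : A) ⊗ₜ[R] c x) := by
      rw [PiTensorProduct.tprod_mul_tprod]
      congr 1
      funext x
      show b x ⊗ₜ[R] c x = ((b x) ⊗ₜ[R] (1 : A)) * ((1 : A) ⊗ₜ[R] c x)
      rw [Algebra.TensorProduct.tmul_mul_tmul, mul_one, one_mul]
    have h2 : (tprod A (fun x : Fin (q + 1) => (b x) ⊗ₜ[R] (1 : A)) : YY R A q)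
        = algebraMap A (YY R A q) (∏ x, b x) := by
      have h3 : (fun x : Fin (q + 1) => (b x) ⊗ₜ[R] (1 : A))
          = fun x : Fin (q + 1) => b x • (1 : A ⊗[R] A) := by
        funext x
        rw [Algebra.TensorProduct.one_def, TensorProduct.smul_tmul', smul_eq_mul, mul_one]
      rw [h3, MultilinearMap.map_smul_univ,
        show (fun _ : Fin (q + 1) => (1 : A ⊗[R] A)) = 1 from rfl,
        ← PiTensorProduct.one_def, Algebra.algebraMap_eq_smul_one]
    rw [h1, _root_.map_mul, h2, hsq]
  -- cocone over (unitC q, jYhom q)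
  have hco : ∀ q : ℕ, (unitC q).comp lm = (jYhom (R := R) (A := A) q).comp (ι q) := by
    intro q
    apply ext_ringHom_tensor
    intro b c
    rw [RingHom.comp_apply, RingHom.comp_apply, hlm, hunitC, hι]
    have h1 : (fun x : Fin (q + 1) => if x = 0 then b ⊗ₜ[R] c else 1)
        = fun x : Fin (q + 1) =>
            (if x = 0 then b else 1) ⊗ₜ[R] (if x = 0 then c else 1) := by
      funext x
      split_ifs with hx
      · rfl
      · exact Algebra.TensorProduct.one_def
    rw [h1, jYhom_tprod]
    congr 1
    funext j
    by_cases hj : j = 0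
    · subst hj
      simp
    · simp [hj]
  -- main construction
  have main : ∀ q : ℕ, ∃ E : P q ≃+* TT R A q,
      (∀ (a : A) (b c : Fin (q + 1) → A),
        E (iA q a * iY q (tprod A fun x => b x ⊗ₜ[R] c x))
          = tprod R (fun j => if j = 0 then a * (∏ x, b x) * c 0 else c j))
      ∧ (∀ a : A, E (iA q a) = unitC q a) := by
    intro q
    obtain ⟨e, ⟨heA, heY⟩, -⟩ := (hP q).2 (TT R A q) (unitC q) (jYhom q) (hco q)
    have heA' : ∀ a : A, e (iA q a) = unitC q a := fun a => by
      calc e (iA q a) = (e.comp (iA q)) a := rfl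
        _ = unitC q a := by rw [heA]
    have heY' : ∀ u, e (iY q u) = jYhom (R := R) (A := A) q u := fun u => by
      calc e (iY q u) = (e.comp (iY q)) u := rfl
        _ = jYhom q u := by rw [heY]
    have heform : ∀ (a : A) (b c : Fin (q + 1) → A),
        e (iA q a * iY q (tprod A fun x => b x ⊗ₜ[R] c x))
          = tprod R (fun j => if j = 0 then a * (∏ x, b x) * c 0 else c j) := by
      intro a b c
      rw [_root_.map_mul, heA' a, heY', hunitC, jYhom_tprod,
        PiTensorProduct.tprod_mul_tprod]
      congr 1
      funext j
      by_cases hj : j = 0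
      · subst hj
        simp [mul_assoc]
      · simp [hj]
    have hgA : ∀ a : A, ghom q (iA q) (iY q) (hsq q) (unitC q a) = iA q a := by
      intro a
      rw [hunitC, ghom_tprod]
      have h1 : (fun x : Fin (q + 1) => (1 : A) ⊗ₜ[R] (if x = 0 then a else 1))
          = Pi.mulSingle (M := fun _ : Fin (q + 1) => A ⊗[R] A) 0 ((1 : A) ⊗ₜ[R] a) := by
        funext x
        rw [Pi.mulSingle_apply]
        split_ifs with hx
        · rfl
        · exact Algebra.TensorProduct.one_def.symm
      rw [h1, hsingle, hlm, one_mul]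
    have hid : (ghom q (iA q) (iY q) (hsq q)).comp e = RingHom.id (P q) := by
      obtain ⟨h0, -, huniq⟩ := (hP q).2 (P q) (iA q) (iY q) (hP q).1
      have e1 : ((ghom q (iA q) (iY q) (hsq q)).comp e).comp (iA q) = iA q := by
        refine RingHom.ext fun a => ?_
        show ghom q (iA q) (iY q) (hsq q) (e (iA q a)) = iA q a
        rw [heA' a, hgA]
      have e2 : ((ghom q (iA q) (iY q) (hsq q)).comp e).comp (iY q) = iY q := by
        apply extY
        intro b c
        show ghom q (iA q) (iY q) (hsq q) (e (iY q (tprod A fun x => b x ⊗ₜ[R] c x)))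
          = iY q (tprod A fun x => b x ⊗ₜ[R] c x)
        rw [heY', jYhom_tprod, ghom_tprod, hkey q b c]
        have h1 : (tprod A (fun x : Fin (q + 1) =>
              (1 : A) ⊗ₜ[R] (if x = 0 then (∏ x, b x) * c 0 else c x)) : YY R A q)
            = tprod A (Pi.mulSingle (M := fun _ : Fin (q + 1) => A ⊗[R] A) 0
                ((1 : A) ⊗ₜ[R] (∏ x, b x)))
              * tprod A (fun x : Fin (q + 1) => (1 : A) ⊗ₜ[R] c x) := by
          rw [PiTensorProduct.tprod_mul_tprod]
          congr 1
          funext x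
          show (1 : A) ⊗ₜ[R] (if x = 0 then (∏ x, b x) * c 0 else c x)
            = (Pi.mulSingle (M := fun _ : Fin (q + 1) => A ⊗[R] A) 0
                ((1 : A) ⊗ₜ[R] (∏ x, b x)) x) * ((1 : A) ⊗ₜ[R] c x)
          rw [Pi.mulSingle_apply]
          split_ifs with hx
          · subst hx
            rw [Algebra.TensorProduct.tmul_mul_tmul, one_mul]
          · rw [one_mul]
        rw [h1, _root_.map_mul, hsingle, hlm, one_mul]
      have u1 := huniq _ ⟨e1, e2⟩
      have u2 := huniq (RingHom.id (P q)) ⟨RingHom.id_comp _, RingHom.id_comp _⟩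
      rw [u1, u2]
    have hid2 : e.comp (ghom q (iA q) (iY q) (hsq q)) = RingHom.id (TT R A q) := by
      apply extT
      intro a
      show e (ghom q (iA q) (iY q) (hsq q) (tprod R a)) = RingHom.id _ (tprod R a)
      rw [ghom_tprod, heY']
      have h1 : (fun x : Fin (q + 1) => (1 : A) ⊗ₜ[R] a x)
          = fun x : Fin (q + 1) => (fun _ => (1 : A)) x ⊗ₜ[R] a x := rfl
      rw [h1, jYhom_tprod]
      simp only [RingHom.id_apply]
      congr 1
      funext j
      by_cases hj : j = 0
      · subst hj
        simp
      · simp [hj]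
    refine ⟨RingEquiv.ofRingHom e (ghom q (iA q) (iY q) (hsq q)) hid2 hid, ?_, ?_⟩
    · intro a b c
      exact heform a b c
    · intro a
      exact heA' a
  choose E hEform hEunit using main
  -- the extensionality principle for ring homs out of P q
  have extP : ∀ (q : ℕ) (H : Type) (instH : CommRing H) (g1 g2 : P q →+* H),
      (∀ (a : A) (b c : Fin (q + 1) → A),
        g1 (iA q a * iY q (tprod A fun x => b x ⊗ₜ[R] c x))
          = g2 (iA q a * iY q (tprod A fun x => b x ⊗ₜ[R] c x))) → g1 = g2 := by
    intro q H instH g1 g2 hgen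
    have hone : (tprod A (fun _ : Fin (q + 1) => (1 : A) ⊗ₜ[R] (1 : A)) : YY R A q) = 1 := by
      rw [show (fun _ : Fin (q + 1) => (1 : A) ⊗ₜ[R] (1 : A))
          = (fun _ : Fin (q + 1) => (1 : A ⊗[R] A)) from
        funext fun _ => Algebra.TensorProduct.one_def.symm]
      exact (PiTensorProduct.one_def).symm
    have hA : g1.comp (iA q) = g2.comp (iA q) := by
      refine RingHom.ext fun a => ?_
      have h := hgen a (fun _ => 1) (fun _ => 1)
      rw [hone, _root_.map_one, mul_one] at h
      exact h
    have hY : g1.comp (iY q) = g2.comp (iY q) := by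
      apply extY
      intro b c
      have h := hgen 1 b c
      rw [_root_.map_one, one_mul] at h
      exact h
    obtain ⟨h0, -, huniq⟩ := (hP q).2 H (g1.comp (iA q)) (g1.comp (iY q))
      (by rw [RingHom.comp_assoc, RingHom.comp_assoc, (hP q).1])
    have u1 := huniq g1 ⟨rfl, rfl⟩
    have u2 := huniq g2 ⟨hA.symm, hY.symm⟩
    rw [u1, u2]
  refine ⟨E, hEform, ?_, ?_, ?_, ?_, ?_⟩
  · -- compatibility with face maps
    intro q i
    refine extP (q + 1) _ _ _ _ fun a b c => ?_
    show E q (DX q i (iA (q + 1) a * iY (q + 1) (tprod A fun x => b x ⊗ₜ[R] c x)))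
      = dC q i (E (q + 1) (iA (q + 1) a * iY (q + 1) (tprod A fun x => b x ⊗ₜ[R] c x)))
    rw [hDX q i a (fun x => b x ⊗ₜ[R] c x)]
    rw [show (fun y => fiberMul (A ⊗[R] A) (circFace q i) (fun x => b x ⊗ₜ[R] c x) y)
        = fun y => (fiberMul A (circFace q i) b y) ⊗ₜ[R] (fiberMul A (circFace q i) c y) from
      funext fun y => fiberMul_tmul _ _ _ _]
    rw [hEform q a (fun y => fiberMul A (circFace q i) b y)
      (fun y => fiberMul A (circFace q i) c y)]
    rw [hEform (q + 1) a b c, hdC]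
    rw [prod_fiberMul (circFace q i) b]
    congr 1
    funext y
    rw [merge_key q i (a * ∏ x, b x) c y]
    by_cases hy : y = 0
    · subst hy
      simp
    · simp [hy]
  · -- compatibility with degeneracy maps
    intro q j
    refine extP q _ _ _ _ fun a b c => ?_
    show E (q + 1) (SX q j (iA q a * iY q (tprod A fun x => b x ⊗ₜ[R] c x)))
      = sC q j (E q (iA q a * iY q (tprod A fun x => b x ⊗ₜ[R] c x)))
    rw [hSX q j a (fun x => b x ⊗ₜ[R] c x)]
    rw [show (fun y => fiberMul (A ⊗[R] A) (circDegen q j) (fun x => b x ⊗ₜ[R] c x) y)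
        = fun y => (fiberMul A (circDegen q j) b y) ⊗ₜ[R] (fiberMul A (circDegen q j) c y) from
      funext fun y => fiberMul_tmul _ _ _ _]
    rw [hEform (q + 1) a (fun y => fiberMul A (circDegen q j) b y)
      (fun y => fiberMul A (circDegen q j) c y)]
    rw [hEform q a b c, hsC]
    rw [prod_fiberMul (circDegen q j) b]
    congr 1
    funext y
    rw [insert_key q j (a * ∏ x, b x) c y]
    by_cases hy : y = 0
    · subst hy
      simp
    · simp [hy]
  · -- compatibility with augmentations
    intro q
    refine extP q _ _ _ _ fun a b c => ?_
    show augC q (E q (iA q a * iY q (tprod A fun x => b x ⊗ₜ[R] c x)))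
      = augX q (iA q a * iY q (tprod A fun x => b x ⊗ₜ[R] c x))
    rw [hEform q a b c, haugC, haugX]
    rw [Fin.prod_univ_succ (fun j => if j = 0 then a * (∏ x, b x) * c 0 else c j)]
    rw [if_pos rfl]
    have h1 : ∀ i : Fin q, (if i.succ = 0 then a * (∏ x, b x) * c 0 else c i.succ)
        = c i.succ := fun i => if_neg (Fin.succ_ne_zero i)
    rw [Finset.prod_congr rfl fun i _ => h1 i]
    rw [Finset.prod_mul_distrib, Fin.prod_univ_succ c]
    ring
  · -- compatibility with units
    intro q
    refine RingHom.ext fun a => ?_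
    show E q (iA q a) = unitC q a
    exact hEunit q a
  · -- naturality
    intro R' A' instR' instA' f' gR gA hgf
    intro lm' hlm' ι' hι' P' instP' iA' iY' hP' TP hTP TB hTB E' hE' q
    refine extP q _ _ _ _ fun a b c => ?_
    show TB q (E q (iA q a * iY q (tprod A fun x => b x ⊗ₜ[R] c x)))
      = E' q (TP q (iA q a * iY q (tprod A fun x => b x ⊗ₜ[R] c x)))
    rw [hEform q a b c, hTB, hTP q a b c, hE' q (gA a) (fun x => gA (b x)) (fun x => gA (c x))]
    congr 1
    funext j
    by_cases hj : j = 0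
    · subst hj
      rw [if_pos rfl, if_pos rfl, _root_.map_mul, _root_.map_mul, _root_.map_prod]
    · rw [if_neg hj, if_neg hj]
end

section
/- Let P and M be commutative monoids, and let ι : P → M and ε : M → P be monoid homomorphisms with ε ∘ ι = id_P. Let η_P : P → P^gp and η_M : M → M^gp denote the group completion maps, let ε^gp : M^gp → P^gp and ι^gp : P^gp → M^gp be the induced maps, and let W = {x ∈ M^gp : ε^gp(x) = 1} be the kernel of ε^gp. Then the map P × W → P ×_{P^gp} M^gp sending (p, w) to (p, ι^gp(η_P(p))·w) is an isomorphism of commutative monoids, where P ×_{P^gp} M^gp denotes the pullback of η_P : P → P^gp and ε^gp : M^gp → P^gp, i.e., the submonoid {(p, x) ∈ P × M^gp : η_P(p) = ε^gp(x)}. -/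
universe u

/-- `η : M →* G` exhibits the abelian group `G` as the group completion
(Grothendieck group) of the commutative monoid `M`. -/
def IsGroupCompletion {M G : Type u} [CommMonoid M] [CommGroup G]
    (η : M →* G) : Prop :=
  ∀ (H : Type u) [CommGroup H] (f : M →* H), ∃! g : G →* H, g.comp η = f

/-- Splitting of the repletion of an augmented commutative monoid: if
`ι : P → M` and `ε : M → P` satisfy `ε ∘ ι = id`, and `W` is the kernel of
`ε^gp : M^gp → P^gp`, then `(p, w) ↦ (p, ι^gp(η_P p) · w)` is an isomorphism
of commutative monoids from `P × W` to the pullback `P ×_{P^gp} M^gp` of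
`η_P : P → P^gp` and `ε^gp : M^gp → P^gp`. -/
theorem augmented_repletion_splitting
    {P M Pgp Mgp : Type u} [CommMonoid P] [CommMonoid M]
    [CommGroup Pgp] [CommGroup Mgp]
    (ι : P →* M) (ε : M →* P) (hsec : ε.comp ι = MonoidHom.id P)
    (ηP : P →* Pgp) (hP : IsGroupCompletion ηP)
    (ηM : M →* Mgp) (hM : IsGroupCompletion ηM)
    (εgp : Mgp →* Pgp) (hεgp : εgp.comp ηM = ηP.comp ε)
    (ιgp : Pgp →* Mgp) (hιgp : ιgp.comp ηP = ηM.comp ι) :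
    -- `W` is the kernel of `ε^gp`
    let W : Subgroup Mgp := εgp.ker
    -- the pullback `P ×_{P^gp} M^gp`
    let pb : Submonoid (P × Mgp) :=
      { carrier := {x | ηP x.1 = εgp x.2}
        one_mem' := by simp
        mul_mem' := by
          intro x y hx hy
          simp only [Set.mem_setOf_eq, Prod.fst_mul, Prod.snd_mul, map_mul] at *
          rw [hx, hy] }
    ∃ e : (P × W) ≃* pb,
      ∀ (p : P) (w : W), (e (p, w) : P × Mgp) = (p, ιgp (ηP p) * (w : Mgp)) := by
  intro W pb
  have hcomp : εgp.comp ιgp = MonoidHom.id Pgp := by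
    obtain ⟨g, hg, hu⟩ := hP Pgp ηP
    have h1 : (εgp.comp ιgp).comp ηP = ηP := by
      rw [MonoidHom.comp_assoc, hιgp, ← MonoidHom.comp_assoc, hεgp,
        MonoidHom.comp_assoc, hsec, MonoidHom.comp_id]
    rw [hu _ h1, hu (MonoidHom.id Pgp) (MonoidHom.id_comp ηP)]
  have hει : ∀ x : Pgp, εgp (ιgp x) = x := fun x => DFunLike.congr_fun hcomp x
  refine ⟨{ toFun := fun pw => ⟨(pw.1, ιgp (ηP pw.1) * (pw.2 : Mgp)), ?_⟩
            invFun := fun x => (x.1.1, ⟨x.1.2 * (ιgp (ηP x.1.1))⁻¹, ?_⟩)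
            left_inv := ?_
            right_inv := ?_
            map_mul' := ?_ }, fun p w => rfl⟩
  · have hw : εgp (pw.2 : Mgp) = 1 := pw.2.2
    show ηP pw.1 = εgp _
    simp [hει, hw]
  · have hx : ηP x.1.1 = εgp x.1.2 := x.2
    show εgp _ = 1
    simp [hει, ← hx]
  · intro pw
    refine Prod.ext rfl (Subtype.ext ?_)
    show ιgp (ηP pw.1) * (pw.2 : Mgp) * (ιgp (ηP pw.1))⁻¹ = (pw.2 : Mgp)
    rw [mul_right_comm, mul_inv_cancel, one_mul]
  · intro x
    refine Subtype.ext (Prod.ext rfl ?_)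
    show ιgp (ηP x.1.1) * (x.1.2 * (ιgp (ηP x.1.1))⁻¹) = x.1.2
    rw [mul_comm, inv_mul_cancel_right]
  · intro a b
    refine Subtype.ext (Prod.ext rfl ?_)
    show ιgp (ηP (a.1 * b.1)) * ((a.2 : W) * b.2 : Mgp) =
      ιgp (ηP a.1) * (a.2 : Mgp) * (ιgp (ηP b.1) * (b.2 : Mgp))
    rw [map_mul, map_mul, mul_mul_mul_comm]
end
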